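/- arXiv:1908.09578 — 2 statements merged into one kernel-verified Lean document; each statement's English description precedes it below -/
import Mathlib

section
/- Suppose ε ≠ 0. If (X,Y,Z,W) ∈ ℂ⁴ satisfies the two equations 2εX − ζW = 0 and (3αε²ζ + 2βε³ − ζ³)W² − ε²(δε − γζ)ZW + 2ε³Y² = 0, then F(X,Y,Z,W) = 0. In other words, the conic R₁ defined by this complete intersection lies on the quartic Q(α,β,γ,δ,ε,ζ). -/
noncomputable section

/-- The defining polynomial `F` of the generalized Inose quartic
`Q(α,β,γ,δ,ε,ζ) ⊂ ℙ³`. -/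
def inoseF (α β γ δ ε ζ X Y Z W : ℂ) : ℂ :=
  Y ^ 2 * Z * W - 4 * X ^ 3 * Z + 3 * α * X * Z * W ^ 2 + β * Z * W ^ 3 + γ * X * Z ^ 2 * W
    - (1 / 2) * (δ * Z ^ 2 * W ^ 2 + ζ * W ^ 4) + ε * X * W ^ 3

/-- The conic R₁, defined as the complete intersection
`2εX − ζW = (3αε²ζ + 2βε³ − ζ³)W² − ε²(δε − γζ)ZW + 2ε³Y² = 0`,
lies on the quartic Q(α,β,γ,δ,ε,ζ) (for ε ≠ 0). -/
theorem stmt1 (α β γ δ ε ζ : ℂ) (hε : ε ≠ 0) (X Y Z W : ℂ)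
    (h1 : 2 * ε * X - ζ * W = 0)
    (h2 : (3 * α * ε ^ 2 * ζ + 2 * β * ε ^ 3 - ζ ^ 3) * W ^ 2
      - ε ^ 2 * (δ * ε - γ * ζ) * Z * W + 2 * ε ^ 3 * Y ^ 2 = 0) :
    inoseF α β γ δ ε ζ X Y Z W = 0 := by
  have h3 : (2 * ε ^ 3 : ℂ) ≠ 0 := by
    simp [pow_ne_zero, hε]
  apply mul_left_cancel₀ h3
  unfold inoseF
  linear_combination (Z * W) * h2 +
    (-(4 * ε ^ 2 * Z) * X ^ 2 - (2 * ζ * Z * W * ε) * X +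
      (3 * α * ε ^ 2 * Z * W ^ 2 + γ * ε ^ 2 * Z ^ 2 * W + ε ^ 3 * W ^ 3 - ζ ^ 2 * Z * W ^ 2)) * h1
end
end

section
/- Suppose γ ≠ 0. If (X,Y,Z,W) ∈ ℂ⁴ satisfies the two equations 2γX − δW = 0 and (3αγ²δ + 2βγ³ − δ³)ZW² − γ²(γζ − δε)W³ + 2γ³Y²Z = 0, then F(X,Y,Z,W) = 0. In other words, the cubic curve R₂ defined by this complete intersection lies on the quartic Q(α,β,γ,δ,ε,ζ). -/
noncomputable section

/-- The cubic curve R₂, defined as the complete intersection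
`2γX − δW = (3αγ²δ + 2βγ³ − δ³)ZW² − γ²(γζ − δε)W³ + 2γ³Y²Z = 0`,
lies on the quartic Q(α,β,γ,δ,ε,ζ) (for γ ≠ 0). -/
theorem stmt2 (α β γ δ ε ζ : ℂ) (hγ : γ ≠ 0) (X Y Z W : ℂ)
    (h1 : 2 * γ * X - δ * W = 0)
    (h2 : (3 * α * γ ^ 2 * δ + 2 * β * γ ^ 3 - δ ^ 3) * Z * W ^ 2
      - γ ^ 2 * (γ * ζ - δ * ε) * W ^ 3 + 2 * γ ^ 3 * Y ^ 2 * Z = 0) :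
    inoseF α β γ δ ε ζ X Y Z W = 0 := by
  have hg3 : (2 * γ ^ 3 : ℂ) ≠ 0 := by simp [hγ]
  have key : 2 * γ ^ 3 * inoseF α β γ δ ε ζ X Y Z W = 0 := by
    unfold inoseF
    linear_combination (W) * h2 +
      (-(Z * (4 * γ ^ 2 * X ^ 2 + 2 * γ * δ * X * W + δ ^ 2 * W ^ 2))
        + 3 * α * γ ^ 2 * Z * W ^ 2 + γ ^ 3 * Z ^ 2 * W + γ ^ 2 * ε * W ^ 3) * h1
  exact (mul_eq_zero.mp key).resolve_left hg3
end
end
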